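/- Let λ₁, κ₁, λ₂, κ₂ ∈ 𝔽_q((T^{-1})) with Δ := |λ₁κ₂ − λ₂κ₁| > 0, and set L_j(Q) := λ_j Q₁ + κ_j Q₂ for Q = (Q₁,Q₂) and j = 1,2. Then for all ρ₁, ρ₂ ∈ 𝔽_q((T^{-1})) there exists Q ∈ 𝔽_q[T]² such that |L₁(Q) + ρ₁|·|L₂(Q) + ρ₂| ≤ q^{-2}·Δ. -/

import Mathlib

open Polynomial Filter
open scoped Classical ENNReal

noncomputable section

variable (Fq : Type) [Field Fq] [Fintype Fq]

/-- The element `T` inside the Laurent-series field `𝔽_q((T⁻¹))`, which we realize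
as the field of Hahn/Laurent series in the variable `T⁻¹`. -/
def Tel : LaurentSeries Fq := HahnSeries.single (-1 : ℤ) 1

/-- The inverse variable `T⁻¹` itself. -/
def TinvEl : LaurentSeries Fq := HahnSeries.single (1 : ℤ) 1

/-- The embedding of the polynomial ring `𝔽_q[T]` into `𝔽_q((T⁻¹))`,
sending `T` to `Tel`. -/
def polyToL (P : Polynomial Fq) : LaurentSeries Fq :=
  Polynomial.eval₂ HahnSeries.C (Tel Fq) P

/-- The absolute value `|x| = q ^ (deg x)` on `𝔽_q((T⁻¹))`, with `|0| = 0`.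
Here the degree of `x ≠ 0` is minus the order of `x` as a series in `T⁻¹`. -/
def labs (x : LaurentSeries Fq) : ℝ :=
  if x = 0 then 0 else (Fintype.card Fq : ℝ) ^ (-x.order)

/-- `‖x‖`: the distance from `x` to the nearest polynomial. -/
def lnorm (x : LaurentSeries Fq) : ℝ :=
  ⨅ P : Polynomial Fq, labs Fq (x - polyToL Fq P)

/-- `x ∈ 𝔽_q(T)`, i.e. `x` is rational. -/
def IsRat (x : LaurentSeries Fq) : Prop :=
  ∃ P Q : Polynomial Fq, Q ≠ 0 ∧ polyToL Fq Q * x = polyToL Fq P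

/-!
The conclusion, for the forms with coefficient matrix `(l k)`, is invariant under swapping the
rows, swapping the columns, and shearing `l ↦ l + P k` with `P ∈ 𝔽_q[T]` (a change of
variables in `Q`); none of these changes `|l₁ k₂ - l₂ k₁|`. If `|k₁ k₂| ≤ |l₁ k₂ - l₂ k₁|`,
choose `Q₁` so that `k₂ (L₁ + ρ₁) - k₁ (L₂ + ρ₂)` has size at most `|det| / q`, then `Q₂` so that
`|L₂ + ρ₂| ≤ |k₂| / q`; the ultrametric inequality gives the bound. Otherwise, a
continued-fraction step (shearing by the polynomial part of `-l₁ / k₁`, then swapping columns)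
turns `|k₁ k₂| ≤ q ^ (n + 1) |det|` into the same bound with exponent `n`, so finitely many
steps reach the first case.
-/

section PolyToL

variable {K : Type} [Field K]

lemma polyToL_monomial (n : ℕ) (a : K) :
    polyToL K (monomial n a) = HahnSeries.single (-(n : ℤ)) a := by
  rw [polyToL, eval₂_monomial, Tel, HahnSeries.single_pow, HahnSeries.C_apply,
    HahnSeries.single_mul_single]
  simp

lemma coeff_polyToL_neg_natCast (P : K[X]) (k : ℕ) :
    (polyToL K P).coeff (-(k : ℤ)) = P.coeff k := by
  induction P using Polynomial.induction_on' with
  | add P R hP hR => rw [polyToL, eval₂_add, HahnSeries.coeff_add, ← polyToL, ← polyToL, hP, hR,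
      coeff_add]
  | monomial n a =>
    rw [polyToL_monomial, HahnSeries.coeff_single, coeff_monomial]
    simp only [neg_inj, Nat.cast_inj, eq_comm]

end PolyToL

section Minkowski

variable {Fq}

lemma one_lt_card_real : (1 : ℝ) < Fintype.card Fq := by exact_mod_cast Fintype.one_lt_card

lemma labs_zero : labs Fq 0 = 0 := if_pos rfl

lemma labs_of_ne_zero {x : LaurentSeries Fq} (hx : x ≠ 0) :
    labs Fq x = (Fintype.card Fq : ℝ) ^ (-x.order) := if_neg hx

lemma labs_pos {x : LaurentSeries Fq} (hx : x ≠ 0) : 0 < labs Fq x := by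
  rw [labs_of_ne_zero hx]; positivity

lemma labs_nonneg (x : LaurentSeries Fq) : 0 ≤ labs Fq x := by
  rcases eq_or_ne x 0 with rfl | hx
  · exact labs_zero.ge
  · exact (labs_pos hx).le

lemma labs_mul (x y : LaurentSeries Fq) : labs Fq (x * y) = labs Fq x * labs Fq y := by
  rcases eq_or_ne x 0 with rfl | hx
  · simp [labs_zero]
  rcases eq_or_ne y 0 with rfl | hy
  · simp [labs_zero]
  rw [labs_of_ne_zero hx, labs_of_ne_zero hy, labs_of_ne_zero (mul_ne_zero hx hy),
    HahnSeries.order_mul hx hy, neg_add, zpow_add₀ (by positivity)]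

lemma labs_neg (x : LaurentSeries Fq) : labs Fq (-x) = labs Fq x := by
  rcases eq_or_ne x 0 with rfl | hx
  · rw [neg_zero]
  rw [labs_of_ne_zero hx, labs_of_ne_zero (neg_ne_zero.mpr hx), HahnSeries.order_neg]

lemma labs_add_le (x y : LaurentSeries Fq) :
    labs Fq (x + y) ≤ max (labs Fq x) (labs Fq y) := by
  rcases eq_or_ne x 0 with rfl | hx
  · simp
  rcases eq_or_ne y 0 with rfl | hy
  · simp
  rcases eq_or_ne (x + y) 0 with hxy | hxy
  · rw [hxy, labs_zero]; exact le_max_of_le_left (labs_nonneg x)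
  have hmin := HahnSeries.min_order_le_order_add hxy
  rw [labs_of_ne_zero hx, labs_of_ne_zero hy, labs_of_ne_zero hxy]
  rcases le_total x.order y.order with h | h
  · exact le_max_of_le_left (zpow_le_zpow_right₀ one_lt_card_real.le (by omega))
  · exact le_max_of_le_right (zpow_le_zpow_right₀ one_lt_card_real.le (by omega))

lemma labs_le_inv_card_of_coeff_eq_zero {x : LaurentSeries Fq} (h : ∀ m ≤ 0, x.coeff m = 0) :
    labs Fq x ≤ (Fintype.card Fq : ℝ)⁻¹ := by
  rcases eq_or_ne x 0 with rfl | hx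
  · rw [labs_zero]; positivity
  have hord : 1 ≤ x.order := by
    by_contra! hlt
    exact hx (HahnSeries.coeff_order_eq_zero.mp (h _ (by omega)))
  rw [labs_of_ne_zero hx, ← zpow_neg_one]
  exact zpow_le_zpow_right₀ one_lt_card_real.le (by omega)

lemma exists_labs_sub_polyToL_le (x : LaurentSeries Fq) :
    ∃ P : Fq[X], labs Fq (x - polyToL Fq P) ≤ (Fintype.card Fq : ℝ)⁻¹ := by
  set N := (-x.order).toNat
  refine ⟨∑ i ∈ Finset.range (N + 1), monomial i (x.coeff (-(i : ℤ))),
    labs_le_inv_card_of_coeff_eq_zero fun m hm => ?_⟩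
  obtain ⟨k, rfl⟩ : ∃ k : ℕ, m = -(k : ℤ) := ⟨(-m).toNat, by omega⟩
  rw [HahnSeries.coeff_sub, coeff_polyToL_neg_natCast, finsetSum_coeff]
  simp only [coeff_monomial, Finset.sum_ite_eq', Finset.mem_range]
  split_ifs with hk
  · exact sub_self _
  · rw [sub_zero, HahnSeries.coeff_eq_zero_of_lt_order (by omega)]

lemma exists_labs_mul_polyToL_add_le {a : LaurentSeries Fq} (ha : a ≠ 0) (x : LaurentSeries Fq) :
    ∃ P : Fq[X], labs Fq (a * polyToL Fq P + x) ≤ labs Fq a / Fintype.card Fq := by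
  obtain ⟨P, hP⟩ := exists_labs_sub_polyToL_le (-x / a)
  refine ⟨P, ?_⟩
  rw [show a * polyToL Fq P + x = -(a * (-x / a - polyToL Fq P)) by field_simp; ring,
    labs_neg, labs_mul, div_eq_mul_inv]
  exact mul_le_mul_of_nonneg_left hP (labs_nonneg a)

variable (Fq) in
def MinkowskiProperty (l₁ k₁ l₂ k₂ : LaurentSeries Fq) : Prop :=
  ∀ ρ₁ ρ₂ : LaurentSeries Fq, ∃ Q₁ Q₂ : Fq[X],
    labs Fq (l₁ * polyToL Fq Q₁ + k₁ * polyToL Fq Q₂ + ρ₁) *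
      labs Fq (l₂ * polyToL Fq Q₁ + k₂ * polyToL Fq Q₂ + ρ₂) ≤
      labs Fq (l₁ * k₂ - l₂ * k₁) / (Fintype.card Fq : ℝ) ^ 2

namespace MinkowskiProperty

variable {l₁ k₁ l₂ k₂ : LaurentSeries Fq}

lemma of_swap_rows (h : MinkowskiProperty Fq l₂ k₂ l₁ k₁) : MinkowskiProperty Fq l₁ k₁ l₂ k₂ := by
  intro ρ₁ ρ₂
  obtain ⟨Q₁, Q₂, hQ⟩ := h ρ₂ ρ₁
  refine ⟨Q₁, Q₂, ?_⟩
  rwa [mul_comm, show l₁ * k₂ - l₂ * k₁ = -(l₂ * k₁ - l₁ * k₂) by ring, labs_neg]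

lemma of_swap_cols (h : MinkowskiProperty Fq k₁ l₁ k₂ l₂) : MinkowskiProperty Fq l₁ k₁ l₂ k₂ := by
  intro ρ₁ ρ₂
  obtain ⟨Q₁, Q₂, hQ⟩ := h ρ₁ ρ₂
  refine ⟨Q₂, Q₁, ?_⟩
  rw [show l₁ * k₂ - l₂ * k₁ = -(k₁ * l₂ - k₂ * l₁) by ring, labs_neg]
  convert hQ using 4 <;> ring

lemma of_shear (P : Fq[X])
    (h : MinkowskiProperty Fq (l₁ + polyToL Fq P * k₁) k₁ (l₂ + polyToL Fq P * k₂) k₂) :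
    MinkowskiProperty Fq l₁ k₁ l₂ k₂ := by
  intro ρ₁ ρ₂
  obtain ⟨Q₁, Q₂, hQ⟩ := h ρ₁ ρ₂
  refine ⟨Q₁, Q₂ + P * Q₁, ?_⟩
  have hpoly : polyToL Fq (Q₂ + P * Q₁) = polyToL Fq Q₂ + polyToL Fq P * polyToL Fq Q₁ := by
    simp only [polyToL, eval₂_add, eval₂_mul]
  rw [show (l₁ + polyToL Fq P * k₁) * k₂ - (l₂ + polyToL Fq P * k₂) * k₁ = l₁ * k₂ - l₂ * k₁ by
    ring] at hQ
  rw [hpoly]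
  convert hQ using 3 <;> ring

end MinkowskiProperty

lemma minkowskiProperty_of_labs_mul_le_of_ne_zero {l₁ k₁ l₂ k₂ : LaurentSeries Fq}
    (hd : l₁ * k₂ - l₂ * k₁ ≠ 0) (hk₂ : k₂ ≠ 0)
    (hk : labs Fq k₁ * labs Fq k₂ ≤ labs Fq (l₁ * k₂ - l₂ * k₁)) :
    MinkowskiProperty Fq l₁ k₁ l₂ k₂ := by
  intro ρ₁ ρ₂
  set d := l₁ * k₂ - l₂ * k₁
  set q := (Fintype.card Fq : ℝ)
  -- `Q₁` makes `k₂ L₁ - k₁ L₂ = d Q₁ + (k₂ ρ₁ - k₁ ρ₂)` small, then `Q₂` makes `L₂` small.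
  obtain ⟨Q₁, h₁⟩ := exists_labs_mul_polyToL_add_le hd (k₂ * ρ₁ - k₁ * ρ₂)
  obtain ⟨Q₂, h₂⟩ := exists_labs_mul_polyToL_add_le hk₂ (l₂ * polyToL Fq Q₁ + ρ₂)
  refine ⟨Q₁, Q₂, ?_⟩
  set e₁ := l₁ * polyToL Fq Q₁ + k₁ * polyToL Fq Q₂ + ρ₁
  set e₂ := l₂ * polyToL Fq Q₁ + k₂ * polyToL Fq Q₂ + ρ₂
  have he₂ : labs Fq e₂ ≤ labs Fq k₂ / q := by
    rwa [show e₂ = k₂ * polyToL Fq Q₂ + (l₂ * polyToL Fq Q₁ + ρ₂) by ring]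
  have he₁ : labs Fq k₂ * labs Fq e₁ ≤ labs Fq d / q := by
    rw [← labs_mul, show k₂ * e₁ = d * polyToL Fq Q₁ + (k₂ * ρ₁ - k₁ * ρ₂) + k₁ * e₂ by ring]
    refine (labs_add_le _ _).trans (max_le h₁ ?_)
    calc labs Fq (k₁ * e₂) ≤ labs Fq k₁ * (labs Fq k₂ / q) := by
          rw [labs_mul]; exact mul_le_mul_of_nonneg_left he₂ (labs_nonneg k₁)
      _ = labs Fq k₁ * labs Fq k₂ / q := by ring
      _ ≤ labs Fq d / q := by gcongr
  calc labs Fq e₁ * labs Fq e₂ ≤ labs Fq e₁ * (labs Fq k₂ / q) :=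
        mul_le_mul_of_nonneg_left he₂ (labs_nonneg e₁)
    _ = labs Fq k₂ * labs Fq e₁ / q := by ring
    _ ≤ labs Fq d / q / q := by gcongr
    _ = labs Fq d / q ^ 2 := by ring

lemma minkowskiProperty_of_labs_mul_le {l₁ k₁ l₂ k₂ : LaurentSeries Fq}
    (hd : l₁ * k₂ - l₂ * k₁ ≠ 0) (hk : labs Fq k₁ * labs Fq k₂ ≤ labs Fq (l₁ * k₂ - l₂ * k₁)) :
    MinkowskiProperty Fq l₁ k₁ l₂ k₂ := by
  rcases eq_or_ne k₂ 0 with rfl | hk₂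
  · have hk₁ : k₁ ≠ 0 := by rintro rfl; simp at hd
    refine .of_swap_rows (minkowskiProperty_of_labs_mul_le_of_ne_zero ?_ hk₁ ?_)
    · rwa [← neg_ne_zero, neg_sub]
    · rw [labs_zero, zero_mul]; exact labs_nonneg _
  · exact minkowskiProperty_of_labs_mul_le_of_ne_zero hd hk₂ hk

lemma exists_labs_shear_mul_le {l₁ k₁ l₂ k₂ : LaurentSeries Fq} (hk₁ : k₁ ≠ 0) :
    ∃ P : Fq[X], labs Fq (l₁ + polyToL Fq P * k₁) * labs Fq (l₂ + polyToL Fq P * k₂) ≤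
      max (labs Fq k₁ * labs Fq k₂ / Fintype.card Fq) (labs Fq (l₁ * k₂ - l₂ * k₁)) /
        Fintype.card Fq := by
  set q := (Fintype.card Fq : ℝ)
  set d := l₁ * k₂ - l₂ * k₁
  obtain ⟨P, hP⟩ := exists_labs_mul_polyToL_add_le hk₁ l₁
  refine ⟨P, ?_⟩
  set m₁ := l₁ + polyToL Fq P * k₁
  set m₂ := l₂ + polyToL Fq P * k₂
  have hm₁ : labs Fq m₁ ≤ labs Fq k₁ / q := by rwa [show m₁ = k₁ * polyToL Fq P + l₁ by ring]
  have hm₂ : labs Fq k₁ * labs Fq m₂ ≤ max (labs Fq k₁ * labs Fq k₂ / q) (labs Fq d) := by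
    rw [← labs_mul, show k₁ * m₂ = m₁ * k₂ + -d by ring]
    refine (labs_add_le _ _).trans (max_le_max ?_ (labs_neg d).le)
    calc labs Fq (m₁ * k₂) ≤ labs Fq k₁ / q * labs Fq k₂ := by
          rw [labs_mul]; exact mul_le_mul_of_nonneg_right hm₁ (labs_nonneg k₂)
      _ = labs Fq k₁ * labs Fq k₂ / q := by ring
  refine le_of_mul_le_mul_left ?_ (labs_pos hk₁)
  calc labs Fq k₁ * (labs Fq m₁ * labs Fq m₂) = labs Fq m₁ * (labs Fq k₁ * labs Fq m₂) := by ring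
    _ ≤ labs Fq k₁ / q * max (labs Fq k₁ * labs Fq k₂ / q) (labs Fq d) :=
        mul_le_mul hm₁ hm₂ (mul_nonneg (labs_nonneg _) (labs_nonneg _))
          (div_nonneg (labs_nonneg _) (by positivity))
    _ = labs Fq k₁ * (max (labs Fq k₁ * labs Fq k₂ / q) (labs Fq d) / q) := by ring

lemma minkowskiProperty_of_labs_mul_le_pow_mul (n : ℕ) {l₁ k₁ l₂ k₂ : LaurentSeries Fq}
    (hd : l₁ * k₂ - l₂ * k₁ ≠ 0)
    (hk : labs Fq k₁ * labs Fq k₂ ≤ (Fintype.card Fq : ℝ) ^ n * labs Fq (l₁ * k₂ - l₂ * k₁)) :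
    MinkowskiProperty Fq l₁ k₁ l₂ k₂ := by
  induction n generalizing l₁ k₁ l₂ k₂ with
  | zero => exact minkowskiProperty_of_labs_mul_le hd (by rwa [pow_zero, one_mul] at hk)
  | succ n ih =>
    rcases eq_or_ne k₁ 0 with rfl | hk₁
    · exact minkowskiProperty_of_labs_mul_le hd (by rw [labs_zero, zero_mul]; exact labs_nonneg _)
    obtain ⟨P, hP⟩ := exists_labs_shear_mul_le (l₁ := l₁) (l₂ := l₂) (k₂ := k₂) hk₁
    have hdet : k₁ * (l₂ + polyToL Fq P * k₂) - k₂ * (l₁ + polyToL Fq P * k₁) =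
        -(l₁ * k₂ - l₂ * k₁) := by ring
    refine .of_shear P (.of_swap_cols (ih ?_ ?_))
    · rwa [hdet, neg_ne_zero]
    · have hq : (1 : ℝ) ≤ Fintype.card Fq := one_lt_card_real.le
      rw [hdet, labs_neg]
      refine hP.trans ((div_le_iff₀ (by positivity)).mpr ?_)
      rw [mul_right_comm, ← pow_succ]
      exact max_le ((div_le_self (mul_nonneg (labs_nonneg _) (labs_nonneg _)) hq).trans hk)
        (le_mul_of_one_le_left (labs_nonneg _) (one_le_pow₀ hq))

end Minkowski

/-- **Minkowski's theorem on products of two inhomogeneous linear forms.**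
If `Δ = |λ₁κ₂ − λ₂κ₁| > 0` then for all `ρ₁, ρ₂` there is `Q ∈ 𝔽_q[T]²` with
`|L₁(Q) + ρ₁|·|L₂(Q) + ρ₂| ≤ q⁻² Δ`. -/
theorem stmt8 (lam1 kap1 lam2 kap2 : LaurentSeries Fq)
    (hΔ : 0 < labs Fq (lam1 * kap2 - lam2 * kap1))
    (ρ1 ρ2 : LaurentSeries Fq) :
    ∃ Q1 Q2 : Polynomial Fq,
      labs Fq (lam1 * polyToL Fq Q1 + kap1 * polyToL Fq Q2 + ρ1) *
        labs Fq (lam2 * polyToL Fq Q1 + kap2 * polyToL Fq Q2 + ρ2) ≤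
        labs Fq (lam1 * kap2 - lam2 * kap1) / (Fintype.card Fq : ℝ) ^ 2 := by
  have hd : lam1 * kap2 - lam2 * kap1 ≠ 0 := by
    rintro hd
    simp [hd, labs_zero] at hΔ
  obtain ⟨n, hn⟩ := pow_unbounded_of_one_lt
    (labs Fq kap1 * labs Fq kap2 / labs Fq (lam1 * kap2 - lam2 * kap1)) (one_lt_card_real (Fq := Fq))
  exact minkowskiProperty_of_labs_mul_le_pow_mul n hd ((div_lt_iff₀ hΔ).mp hn).le ρ1 ρ2

end
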